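/- Suppose the pair (A, C) is detectable, ρ(A) > 0, and ρ(A) < (λ_m + λ_2)/(λ_m − λ_2). Let W = I_m − αL with α a real number satisfying α > 0 and λ_2^{-1}(1 − ρ(A)^{-1}) < α < λ_m^{-1}(1 + ρ(A)^{-1}). Then the pair (W ⊗ A, C̄) is detectable: for every complex λ with |λ| ≥ 1 and every nonzero v ∈ ℂ^{mn} with (W ⊗ A)v = λv, one has C̄v ≠ 0. -/

import Mathlib

open Matrix Kronecker Polynomial

/-! Write `v` as the matrix `Z` with rows `v (p, ·)`, so that `(W ⊗ A) v = λ v` reads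
`W Z Aᵀ = λ Z`. For a unit eigenvector `u` of `L` with eigenvalue `t`, the vector `u* Z` satisfies
`(1 - α t) A (u* Z) = λ (u* Z)`; when `t ≠ 0`, i.e. `λ₂ ≤ t ≤ λₘ`, the bounds on `α` give
`|1 - α t| ρ(A) < 1 ≤ |λ|`, which forces `u* Z = 0`. Hence `L Z = 0`, so by connectivity all
rows of `Z` equal one nonzero vector `x` with `A x = λ x`. Detectability of `(A, C)` gives
`Cᵢ x ≠ 0` for some `i`, and `Cᵢ x` is the `i`-th block of `C̄ v`. -/

/-- The block-diagonal matrix C̄ whose i-th diagonal block is `C i`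
(equivalently, whose i-th block row is eᵢᵀ ⊗ Cᵢ), complexified. -/
def Cbar {m n : ℕ} (r : Fin m → ℕ) (C : ∀ i : Fin m, Matrix (Fin (r i)) (Fin n) ℝ) :
    Matrix (Σ i : Fin m, Fin (r i)) (Fin m × Fin n) ℂ :=
  fun q p => if q.1 = p.1 then ((C q.1).map Complex.ofReal) q.2 p.2 else 0

namespace Matrix

variable {ι κ R : Type*} [Fintype κ]

theorem map_kronecker {α β : Type*} {l m n p : Type*} [Mul α] [Mul β] {f : α → β}
    (hf : ∀ a b, f (a * b) = f a * f b) (A : Matrix l m α) (B : Matrix n p α) :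
    (A ⊗ₖ B).map f = A.map f ⊗ₖ B.map f :=
  ext fun _ _ => hf _ _

theorem kronecker_mulVec_vec_transpose_eq_smul_iff [Fintype ι] [CommSemiring R] {M : Matrix ι ι R}
    {B : Matrix κ κ R} {Z : Matrix ι κ R} {μ : R} :
    (M ⊗ₖ B) *ᵥ vec Zᵀ = μ • vec Zᵀ ↔ M * Z * Bᵀ = μ • Z := by
  have hT : B * Zᵀ * Mᵀ = (M * Z * Bᵀ)ᵀ := by
    simp only [transpose_mul, transpose_transpose, Matrix.mul_assoc]
  rw [kronecker_mulVec_vec, hT, ← vec_smul, vec_inj, ← transpose_smul, transpose_inj]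

theorem smul_mulVec_vecMul_eq_smul [Fintype ι] [CommSemiring R] {M : Matrix ι ι R}
    {B : Matrix κ κ R} {Z : Matrix ι κ R} {w : ι → R} {d μ : R} (hw : w ᵥ* M = d • w)
    (hZ : M * Z * Bᵀ = μ • Z) :
    d • (B *ᵥ (w ᵥ* Z)) = μ • (w ᵥ* Z) := by
  have := congrArg (w ᵥ* ·) hZ
  simpa only [← vecMul_vecMul, hw, smul_vecMul, vecMul_transpose, mulVec_smul, vecMul_smul]
    using this

theorem eq_zero_of_smul_mulVec_eq_smul {𝕜 : Type*} [NormedField 𝕜] {B : Matrix κ κ 𝕜} {ρ : ℝ}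
    (hB : ∀ ν : 𝕜, (∃ y : κ → 𝕜, y ≠ 0 ∧ B *ᵥ y = ν • y) → ‖ν‖ ≤ ρ)
    {d μ : 𝕜} (hd : ‖d‖ * ρ < ‖μ‖) {y : κ → 𝕜} (h : d • (B *ᵥ y) = μ • y) : y = 0 := by
  by_contra hy
  rcases eq_or_ne d 0 with rfl | hd0
  · have hμ : μ ≠ 0 := by rintro rfl; simp at hd
    exact hy ((smul_eq_zero.mp (by simpa using h.symm)).resolve_left hμ)
  · have hν := hB (μ / d) ⟨y, hy, by
      rw [div_eq_inv_mul, mul_smul, ← h, smul_smul, inv_mul_cancel₀ hd0, one_smul]⟩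
    rw [norm_div, div_le_iff₀ (norm_pos_iff.mpr hd0)] at hν
    linarith

theorem mulVec_eq_smul_of_mul_transpose_eq_smul [CommSemiring R] {B : Matrix κ κ R}
    {Z : Matrix ι κ R} {μ : R} (h : Z * Bᵀ = μ • Z) (p : ι) : B *ᵥ Z p = μ • Z p := by
  rw [← vecMul_transpose, ← mul_apply_eq_vecMul, h]
  rfl

theorem charpoly_map_eq_prod {S ν : Type*} [Fintype ι] [DecidableEq ι] [Fintype ν] [CommRing R]
    [CommRing S] (f : R →+* S) {M : Matrix ι ι R} {e : ν → R}
    (h : M.charpoly = ∏ k, (X - C (e k))) : (M.map f).charpoly = ∏ k, (X - C (f (e k))) := by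
  rw [charpoly_map, h, Polynomial.map_prod]
  simp

end Matrix

namespace Matrix.IsHermitian

variable {ι 𝕜 : Type*} [Fintype ι] [DecidableEq ι] [RCLike 𝕜] {A : Matrix ι ι 𝕜}

theorem mul_eq_zero_of_star_eigenvectorBasis_vecMul {κ : Type*} (hA : A.IsHermitian)
    {Z : Matrix ι κ 𝕜}
    (h : ∀ i, hA.eigenvalues i ≠ 0 → star ⇑(hA.eigenvectorBasis i) ᵥ* Z = 0) : A * Z = 0 := by
  rw [hA.spectral_theorem, Unitary.conjStarAlgAut_apply, Matrix.mul_assoc, Matrix.mul_assoc]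
  refine (congrArg _ ?_).trans (Matrix.mul_zero _)
  ext i j
  rw [diagonal_mul]
  by_cases hi : hA.eigenvalues i = 0
  · simp [hi]
  · have hij := congrFun (h i hi) j
    simp only [vecMul, dotProduct, Pi.star_apply, RCLike.star_def, Pi.zero_apply] at hij
    simp [mul_apply, hij]

theorem star_eigenvectorBasis_vecMul (hA : A.IsHermitian) (i : ι) :
    star ⇑(hA.eigenvectorBasis i) ᵥ* A =
      (hA.eigenvalues i : 𝕜) • star ⇑(hA.eigenvectorBasis i) := by
  have h := congrArg star (hA.mulVec_eigenvectorBasis i)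
  rwa [star_mulVec, hA.eq, star_smul, RCLike.real_smul_eq_coe_smul (K := 𝕜),
    star_trivial (hA.eigenvalues i)] at h

theorem exists_eigenvalues_eq {ν : Type*} [Fintype ν] (hA : A.IsHermitian) {e : ν → ℝ}
    (hchar : A.charpoly = ∏ k, (X - C (e k : 𝕜))) (i : ι) : ∃ k, hA.eigenvalues i = e k := by
  have hroot : A.charpoly.eval (hA.eigenvalues i : 𝕜) = 0 := by
    rw [hA.charpoly_eq, eval_prod]
    exact Finset.prod_eq_zero (Finset.mem_univ i) (by simp)
  rw [hchar, eval_prod] at hroot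
  obtain ⟨k, -, hk⟩ := Finset.prod_eq_zero_iff.mp hroot
  exact ⟨k, by simpa [sub_eq_zero] using hk⟩

theorem mul_eq_zero_of_one_sub_smul_mul_mul_transpose_eq_smul {κ : Type*} [Fintype κ]
    (hA : A.IsHermitian) {B : Matrix κ κ 𝕜} {ρ c : ℝ}
    (hB : ∀ ν : 𝕜, (∃ y : κ → 𝕜, y ≠ 0 ∧ B *ᵥ y = ν • y) → ‖ν‖ ≤ ρ) {μ : 𝕜}
    (hgap : ∀ i, hA.eigenvalues i ≠ 0 → |1 - c * hA.eigenvalues i| * ρ < ‖μ‖)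
    {Z : Matrix ι κ 𝕜} (hZ : (1 - (c : 𝕜) • A) * Z * Bᵀ = μ • Z) : A * Z = 0 := by
  refine hA.mul_eq_zero_of_star_eigenvectorBasis_vecMul fun i hi => ?_
  have hw : star ⇑(hA.eigenvectorBasis i) ᵥ* (1 - (c : 𝕜) • A) =
      ((1 - c * hA.eigenvalues i : ℝ) : 𝕜) • star ⇑(hA.eigenvectorBasis i) := by
    rw [vecMul_sub, vecMul_one, vecMul_smul, hA.star_eigenvectorBasis_vecMul, smul_smul,
      RCLike.ofReal_sub, RCLike.ofReal_mul, sub_smul, RCLike.ofReal_one, one_smul]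
  exact eq_zero_of_smul_mulVec_eq_smul hB (by rw [RCLike.norm_ofReal]; exact hgap i hi)
    (smul_mulVec_vecMul_eq_smul hw hZ)

end Matrix.IsHermitian

theorem SimpleGraph.Connected.eq_of_lapMatrix_mul_eq_zero {V κ : Type*} [Fintype V]
    [DecidableEq V] {G : SimpleGraph V} [DecidableRel G.Adj] (hG : G.Connected)
    {Z : Matrix V κ ℂ} (h : (G.lapMatrix ℝ).map Complex.ofReal * Z = 0) (p q : V) :
    Z p = Z q := by
  ext j
  have hre : G.lapMatrix ℝ *ᵥ (fun k => (Z k j).re) = 0 := by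
    ext k
    simpa [mulVec, dotProduct, mul_apply] using congrArg Complex.re (congrFun (congrFun h k) j)
  have him : G.lapMatrix ℝ *ᵥ (fun k => (Z k j).im) = 0 := by
    ext k
    simpa [mulVec, dotProduct, mul_apply] using congrArg Complex.im (congrFun (congrFun h k) j)
  rw [SimpleGraph.lapMatrix_mulVec_eq_zero_iff_forall_reachable] at hre him
  exact Complex.ext (hre p q (hG p q)) (him p q (hG p q))

theorem abs_one_sub_mul_mul_lt_one {α ρ a b t : ℝ} (hα : 0 < α) (hρ : 0 < ρ) (ha : 0 < a)
    (hat : a ≤ t) (htb : t ≤ b) (hlo : a⁻¹ * (1 - ρ⁻¹) < α) (hhi : α < b⁻¹ * (1 + ρ⁻¹)) :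
    |1 - α * t| * ρ < 1 := by
  have hb : 0 < b := ha.trans_le (hat.trans htb)
  have hlo' : 1 - ρ⁻¹ < α * a := by rwa [inv_mul_lt_iff₀ ha, mul_comm] at hlo
  have hhi' : α * b < 1 + ρ⁻¹ := by rwa [lt_inv_mul_iff₀ hb, mul_comm] at hhi
  have hαt : |1 - α * t| < ρ⁻¹ :=
    abs_lt.mpr ⟨by nlinarith [mul_le_mul_of_nonneg_left htb hα.le],
      by nlinarith [mul_le_mul_of_nonneg_left hat hα.le]⟩
  calc |1 - α * t| * ρ < ρ⁻¹ * ρ := by gcongr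
    _ = 1 := inv_mul_cancel₀ hρ.ne'

theorem mem_Icc_of_monotone_of_ne_zero {m : ℕ} (hm : 1 < m) {e : Fin m → ℝ} (he : Monotone e)
    (h0 : e ⟨0, by omega⟩ = 0) {k : Fin m} (hk : e k ≠ 0) :
    e k ∈ Set.Icc (e ⟨1, hm⟩) (e ⟨m - 1, by omega⟩) := by
  have hk0 : k ≠ ⟨0, by omega⟩ := by rintro rfl; exact hk h0
  exact ⟨he (Fin.le_def.mpr (Nat.one_le_iff_ne_zero.mpr fun h => hk0 (Fin.ext h))),
    he (Fin.le_def.mpr (by simp; omega))⟩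

theorem Cbar_mulVec_vec_transpose_apply {m n : ℕ} (r : Fin m → ℕ)
    (C : ∀ i : Fin m, Matrix (Fin (r i)) (Fin n) ℝ) (Z : Matrix (Fin m) (Fin n) ℂ) (i : Fin m)
    (q : Fin (r i)) : (Cbar r C *ᵥ vec Zᵀ) ⟨i, q⟩ = ((C i).map Complex.ofReal *ᵥ Z i) q := by
  simp only [mulVec, dotProduct, Fintype.sum_prod_type, Cbar]
  rw [Finset.sum_eq_single i (fun p _ hp => Finset.sum_eq_zero fun j _ => by
    rw [if_neg (Ne.symm hp), zero_mul]) (fun h => absurd (Finset.mem_univ i) h)]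
  simp

/-- With L the Laplacian of a connected graph on m > 2 vertices,
eigenvalues 0 = λ₁ < λ₂ ≤ ⋯ ≤ λₘ, (A, C) detectable, 0 < ρ(A) < (λₘ + λ₂)/(λₘ − λ₂),
and W = I − αL with α > 0 and λ₂⁻¹(1 − ρ(A)⁻¹) < α < λₘ⁻¹(1 + ρ(A)⁻¹), the pair
(W ⊗ A, C̄) is detectable. -/
theorem stmt2 (m n : ℕ) (hm : 2 < m)
    (G : SimpleGraph (Fin m)) [DecidableRel G.Adj]
    (L : Matrix (Fin m) (Fin m) ℝ) (hL : L = G.lapMatrix ℝ)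
    (hconn : G.Connected)
    (eig : Fin m → ℝ) (heig_mono : Monotone eig)
    (hchar : L.charpoly = ∏ i, (X - Polynomial.C (eig i)))
    (heig0 : eig ⟨0, by omega⟩ = 0) (heig1 : 0 < eig ⟨1, by omega⟩)
    (A : Matrix (Fin n) (Fin n) ℝ)
    (r : Fin m → ℕ) (Cm : ∀ i : Fin m, Matrix (Fin (r i)) (Fin n) ℝ)
    -- (A, C) is detectable
    (hdet : ∀ lam : ℂ, 1 ≤ ‖lam‖ → ∀ v : Fin n → ℂ, v ≠ 0 →
      (A.map Complex.ofReal).mulVec v = lam • v →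
        ∃ i, ((Cm i).map Complex.ofReal).mulVec v ≠ 0)
    -- ρA is the spectral radius of A
    (ρA : ℝ) (hρ_pos : 0 < ρA)
    (hρ_ub : ∀ μ : ℂ, (∃ v : Fin n → ℂ, v ≠ 0 ∧
        (A.map Complex.ofReal).mulVec v = μ • v) → ‖μ‖ ≤ ρA)
    (α : ℝ) (hα_pos : 0 < α)
    (hα_lo : (eig ⟨1, by omega⟩)⁻¹ * (1 - ρA⁻¹) < α)
    (hα_hi : α < (eig ⟨m - 1, by omega⟩)⁻¹ * (1 + ρA⁻¹))
    (W : Matrix (Fin m) (Fin m) ℝ) (hW : W = 1 - α • L) :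
    ∀ lam : ℂ, 1 ≤ ‖lam‖ → ∀ v : Fin m × Fin n → ℂ, v ≠ 0 →
      ((W ⊗ₖ A).map Complex.ofReal).mulVec v = lam • v →
        (Cbar r Cm).mulVec v ≠ 0 := by
  intro lam hlam v hv hvEq
  obtain ⟨Z, rfl⟩ : ∃ Z : Matrix (Fin m) (Fin n) ℂ, v = vec Zᵀ := ⟨of fun p j => v (p, j), rfl⟩
  subst hL hW
  set Lc : Matrix (Fin m) (Fin m) ℂ := (G.lapMatrix ℝ).map Complex.ofReal
  have hLc : Lc.IsHermitian :=
    (G.isHermitian_lapMatrix ℝ).map _ fun _ => (Complex.conj_ofReal _).symm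
  have hZ : (1 - (α : ℂ) • Lc) * Z * (A.map Complex.ofReal)ᵀ = lam • Z := by
    rw [map_kronecker Complex.ofReal_mul, show (1 - α • G.lapMatrix ℝ).map Complex.ofReal =
      1 - (α : ℂ) • Lc by simp [Lc, Matrix.map_sub, Matrix.map_smul]] at hvEq
    exact kronecker_mulVec_vec_transpose_eq_smul_iff.mp hvEq
  have hgap : ∀ i, hLc.eigenvalues i ≠ 0 → |1 - α * hLc.eigenvalues i| * ρA < ‖lam‖ := by
    intro i hi
    obtain ⟨k, hk⟩ := hLc.exists_eigenvalues_eq (charpoly_map_eq_prod Complex.ofRealHom hchar) i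
    rw [hk] at hi ⊢
    obtain ⟨hlo, hhi⟩ := mem_Icc_of_monotone_of_ne_zero (by omega) heig_mono heig0 hi
    exact (abs_one_sub_mul_mul_lt_one hα_pos hρ_pos heig1 hlo hhi hα_lo hα_hi).trans_le hlam
  have hLZ : Lc * Z = 0 := hLc.mul_eq_zero_of_one_sub_smul_mul_mul_transpose_eq_smul hρ_ub hgap hZ
  have hZA : Z * (A.map Complex.ofReal)ᵀ = lam • Z := by
    simpa [Matrix.sub_mul, Matrix.smul_mul, hLZ] using hZ
  have hrows := hconn.eq_of_lapMatrix_mul_eq_zero hLZ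
  set x := Z ⟨0, by omega⟩
  have hx : x ≠ 0 := fun hx => hv (funext fun ⟨p, j⟩ =>
    (congrFun (hrows p ⟨0, by omega⟩) j).trans (congrFun hx j))
  obtain ⟨i, hi⟩ := hdet lam hlam x hx (mulVec_eq_smul_of_mul_transpose_eq_smul hZA _)
  obtain ⟨q, hq⟩ := Function.ne_iff.mp hi
  refine fun hC => hq ?_
  have h := congrFun hC ⟨i, q⟩
  rwa [Cbar_mulVec_vec_transpose_apply, hrows i ⟨0, by omega⟩] at h
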